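/- arXiv:2509.09872 — 5 statements merged into one kernel-verified Lean document; each statement's English description precedes it below -/
import Mathlib

section
/- Discrete Korn inequality: there exists a constant C < ∞, depending only on the dimension d, such that for every ε > 0 and every finitely supported u: εℤ^d → ℝ^d (in particular every u vanishing outside Q_ε), one has Σ_{x ∈ εℤ^d} |∇_ε u(x)|² ≤ C Σ_{x ∈ εℤ^d} |∇^s_ε u(x)|². -/
/-!
**STATEMENT 4 (Discrete Korn inequality).**
There exists a constant `C < ∞`, depending only on the dimension `d`, such that for
every `ε > 0` and every finitely supported `u : εℤ^d → ℝ^d` one has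
`Σ_{x∈εℤ^d} |∇_ε u(x)|² ≤ C Σ_{x∈εℤ^d} |∇^s_ε u(x)|²`.

Lattice functions are indexed by `ℤ^d` (the lattice point `z` sits at `ε·z`);
`∇_ε u(x)` is the `d×d` matrix with entries `(∇_ε u)_{ij} = ∂ⱼ^ε uᵢ` and
`∇^s_ε u = ½(∇_ε u + (∇_ε u)ᵀ)`; `|·|` is the Frobenius norm.
-/

noncomputable section

/-- Discrete gradient matrix: entry `(i,j)` is `∂ⱼ^ε uᵢ (z) = (uᵢ(z+eⱼ) − uᵢ(z))/ε`. -/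
def dgradM {d : ℕ} (ε : ℝ) (u : (Fin d → ℤ) → (Fin d → ℝ)) (z : Fin d → ℤ) :
    Fin d → Fin d → ℝ :=
  fun i j => (u (z + Pi.single j 1) i - u z i) / ε

/-- Symmetric part of a `d×d` matrix. -/
def symPart {d : ℕ} (M : Fin d → Fin d → ℝ) : Fin d → Fin d → ℝ :=
  fun i j => (M i j + M j i) / 2

/-- Squared Frobenius norm of a `d×d` matrix. -/
def frobSq {d : ℕ} (M : Fin d → Fin d → ℝ) : ℝ := ∑ i, ∑ j, (M i j) ^ 2

namespace KornAux

variable {V : Type*} [AddCommGroup V]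

lemma fs_shift {f : V → ℝ} (h : (Function.support f).Finite) (a : V) :
    (Function.support fun z => f (z + a)).Finite := by
  have he : (Function.support fun z => f (z + a)) = (fun z : V => z + a) ⁻¹' (Function.support f) := rfl
  rw [he]
  exact Set.Finite.preimage ((add_left_injective a).injOn) h

omit [AddCommGroup V] in
lemma summable_fs {f : V → ℝ} (h : (Function.support f).Finite) : Summable f := by
  apply summable_of_ne_finset_zero (s := h.toFinset)
  intro z hz
  by_contra h0
  exact hz (h.mem_toFinset.mpr h0)

lemma shift_tsum (f : V → ℝ) (a : V) : ∑' z : V, f (z + a) = ∑' z : V, f z :=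
  (Equiv.addRight a).tsum_eq f

lemma S_shift (f g : V → ℝ) (t s c : V) :
    ∑' z : V, f (z + (t + c)) * g (z + (s + c)) = ∑' z : V, f (z + t) * g (z + s) := by
  rw [← shift_tsum (fun z => f (z + t) * g (z + s)) c]
  congr 1
  funext z
  have h1 : z + (t + c) = z + c + t := by abel
  have h2 : z + (s + c) = z + c + s := by abel
  rw [h1, h2]

/-- Key summation-by-parts identity for forward/backward differences. -/
lemma pair {f g : V → ℝ} (hf : (Function.support f).Finite)
    (hg : (Function.support g).Finite) (a b : V) :
    ∑' z : V, (f (z + b) - f z) * (g (z + a) - g z)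
      = ∑' z : V, (f z - f (z - a)) * (g z - g (z - b)) := by
  have smul : ∀ t s : V, Summable fun z => f (z + t) * g (z + s) := by
    intro t s
    apply summable_fs
    apply Set.Finite.subset (fs_shift hf t)
    rw [Function.support_mul]
    exact Set.inter_subset_left
  have e1 : (fun z : V => (f (z + b) - f z) * (g (z + a) - g z))
      = fun z : V => (f (z + b) * g (z + a) - f (z + b) * g (z + 0))
          - (f (z + 0) * g (z + a) - f (z + 0) * g (z + 0)) := by
    funext z; rw [add_zero]; ring
  have e2 : (fun z : V => (f z - f (z - a)) * (g z - g (z - b)))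
      = fun z : V => (f (z + 0) * g (z + 0) - f (z + 0) * g (z + -b))
          - (f (z + -a) * g (z + 0) - f (z + -a) * g (z + -b)) := by
    funext z; rw [add_zero, ← sub_eq_add_neg, ← sub_eq_add_neg]; ring
  rw [e1, e2]
  rw [Summable.tsum_sub ((smul b a).sub (smul b 0)) ((smul 0 a).sub (smul 0 0)),
      Summable.tsum_sub (smul b a) (smul b 0), Summable.tsum_sub (smul 0 a) (smul 0 0),
      Summable.tsum_sub ((smul 0 0).sub (smul 0 (-b))) ((smul (-a) 0).sub (smul (-a) (-b))),
      Summable.tsum_sub (smul 0 0) (smul 0 (-b)), Summable.tsum_sub (smul (-a) 0) (smul (-a) (-b))]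
  have h1 : ∑' z : V, f (z + b) * g (z + a) = ∑' z : V, f (z + -a) * g (z + -b) := by
    have := S_shift f g (-a) (-b) (a + b)
    have ha : -a + (a + b) = b := by abel
    have hb : -b + (a + b) = a := by abel
    rw [ha, hb] at this
    exact this
  have h2 : ∑' z : V, f (z + b) * g (z + 0) = ∑' z : V, f (z + 0) * g (z + -b) := by
    have := S_shift f g 0 (-b) b
    have ha : (0 : V) + b = b := by abel
    have hb : -b + b = (0 : V) := by abel
    rw [ha, hb] at this
    exact this
  have h3 : ∑' z : V, f (z + 0) * g (z + a) = ∑' z : V, f (z + -a) * g (z + 0) := by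
    have := S_shift f g (-a) 0 a
    have ha : -a + a = (0 : V) := by abel
    have hb : (0 : V) + a = a := by abel
    rw [ha, hb] at this
    exact this
  linarith [h1, h2, h3]

end KornAux

lemma frob_alg {d : ℕ} (M : Fin d → Fin d → ℝ) :
    frobSq M + ∑ i, ∑ j, M i j * M j i = 2 * frobSq (symPart M) := by
  have tr : ∑ i, ∑ j, (M j i) ^ 2 = ∑ i, ∑ j, (M i j) ^ 2 := Finset.sum_comm
  have hz : ∑ i, ∑ j, (((M j i) ^ 2 - (M i j) ^ 2) / 2) = (0 : ℝ) := by
    have h' : ∑ i, ∑ j, (((M j i) ^ 2 - (M i j) ^ 2) / 2)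
        = ((∑ i, ∑ j, (M j i) ^ 2) - ∑ i, ∑ j, (M i j) ^ 2) / 2 := by
      simp [sub_div, Finset.sum_sub_distrib, Finset.sum_div]
    rw [h', tr, sub_self, zero_div]
  have rhs : 2 * frobSq (symPart M)
      = ∑ i, ∑ j, ((M i j) ^ 2 + M i j * M j i + ((M j i) ^ 2 - (M i j) ^ 2) / 2) := by
    simp only [frobSq, symPart, Finset.mul_sum]
    exact Finset.sum_congr rfl fun i _ => Finset.sum_congr rfl fun j _ => by ring
  rw [rhs]
  simp only [Finset.sum_add_distrib]
  rw [hz, add_zero, frobSq]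

theorem discrete_korn_inequality (d : ℕ) (hd : 1 ≤ d) :
    ∃ C : ℝ, ∀ ε : ℝ, 0 < ε →
      ∀ u : (Fin d → ℤ) → (Fin d → ℝ), (Function.support u).Finite →
        ∑' z : Fin d → ℤ, frobSq (dgradM ε u z) ≤
          C * ∑' z : Fin d → ℤ, frobSq (symPart (dgradM ε u z)) := by
  refine ⟨2, fun ε hε u hu => ?_⟩
  have atomFS : ∀ (c : Fin d → ℤ) (i : Fin d),
      (Function.support fun z : Fin d → ℤ => u (z + c) i).Finite := by
    intro c i
    have h0 : (Function.support fun z : Fin d → ℤ => u z i).Finite := by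
      apply hu.subset
      intro z hz h0
      exact hz (congrFun h0 i)
    exact (KornAux.fs_shift h0 c)
  have atomFS0 : ∀ i : Fin d, (Function.support fun z : Fin d → ℤ => u z i).Finite := by
    intro i
    apply hu.subset
    intro z hz h0
    exact hz (congrFun h0 i)
  have fsSub : ∀ (c c' : Fin d → ℤ) (i : Fin d),
      (Function.support fun z : Fin d → ℤ => u (z + c) i - u (z + c') i).Finite := by
    intro c c' i
    exact ((atomFS c i).union (atomFS c' i)).subset (Function.support_sub _ _)
  have sProd : ∀ (c c' cc cc' : Fin d → ℤ) (i j : Fin d),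
      Summable fun z : Fin d → ℤ =>
        (u (z + c) i - u (z + c') i) * (u (z + cc) j - u (z + cc') j) := by
    intro c c' cc cc' i j
    apply KornAux.summable_fs
    apply Set.Finite.subset (fsSub c c' i)
    rw [Function.support_mul]
    exact Set.inter_subset_left
  have entry : ∀ (z : Fin d → ℤ) (i j : Fin d),
      dgradM ε u z i j = ε⁻¹ * (u (z + Pi.single j 1) i - u (z + 0) i) := by
    intro z i j
    simp [dgradM, div_eq_inv_mul]
  have sCross : ∀ i j : Fin d,
      Summable fun z : Fin d → ℤ => dgradM ε u z i j * dgradM ε u z j i := by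
    intro i j
    have h : (fun z : Fin d → ℤ => dgradM ε u z i j * dgradM ε u z j i)
        = fun z : Fin d → ℤ => (ε⁻¹ * ε⁻¹) *
            ((u (z + Pi.single j 1) i - u (z + 0) i) * (u (z + Pi.single i 1) j - u (z + 0) j)) := by
      funext z; rw [entry, entry]; ring
    rw [h]
    exact (sProd (Pi.single j 1) 0 (Pi.single i 1) 0 i j).mul_left _
  have sSq : ∀ i j : Fin d, Summable fun z : Fin d → ℤ => (dgradM ε u z i j) ^ 2 := by
    intro i j
    have h : (fun z : Fin d → ℤ => (dgradM ε u z i j) ^ 2)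
        = fun z : Fin d → ℤ => (ε⁻¹ * ε⁻¹) *
            ((u (z + Pi.single j 1) i - u (z + 0) i) * (u (z + Pi.single j 1) i - u (z + 0) i)) := by
      funext z; rw [entry]; ring
    rw [h]
    exact (sProd (Pi.single j 1) 0 (Pi.single j 1) 0 i i).mul_left _
  have sSymSq : ∀ i j : Fin d,
      Summable fun z : Fin d → ℤ => (symPart (dgradM ε u z) i j) ^ 2 := by
    intro i j
    have h : (fun z : Fin d → ℤ => (symPart (dgradM ε u z) i j) ^ 2)
        = fun z : Fin d → ℤ => (1/4 : ℝ) * ((dgradM ε u z i j) ^ 2)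
            + ((1/2 : ℝ) * (dgradM ε u z i j * dgradM ε u z j i)
              + (1/4 : ℝ) * ((dgradM ε u z j i) ^ 2)) := by
      funext z; simp only [symPart]; ring
    rw [h]
    exact ((sSq i j).mul_left _).add (((sCross i j).mul_left _).add ((sSq j i).mul_left _))
  have sFrob : Summable fun z : Fin d → ℤ => frobSq (dgradM ε u z) := by
    simp only [frobSq]
    exact summable_sum (fun i _ => summable_sum (fun j _ => sSq i j))
  have sCrossSum : Summable fun z : Fin d → ℤ =>
      ∑ i, ∑ j, dgradM ε u z i j * dgradM ε u z j i :=
    summable_sum (fun i _ => summable_sum (fun j _ => sCross i j))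
  -- the cross term is nonnegative
  have crossNonneg : 0 ≤ ∑' z : Fin d → ℤ, ∑ i, ∑ j, dgradM ε u z i j * dgradM ε u z j i := by
    have swap : ∑' z : Fin d → ℤ, ∑ i, ∑ j, dgradM ε u z i j * dgradM ε u z j i
        = ∑ i, ∑ j, ∑' z : Fin d → ℤ, dgradM ε u z i j * dgradM ε u z j i := by
      rw [Summable.tsum_finsetSum (fun i _ => summable_sum (fun j _ => sCross i j))]
      exact Finset.sum_congr rfl (fun i _ => Summable.tsum_finsetSum (fun j _ => sCross i j))
    set B : Fin d → (Fin d → ℤ) → ℝ :=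
      fun i z => u z i - u (z - Pi.single i 1) i with hB
    have perPair : ∀ i j : Fin d,
        ∑' z : Fin d → ℤ, dgradM ε u z i j * dgradM ε u z j i
          = (ε⁻¹ * ε⁻¹) * ∑' z : Fin d → ℤ, B i z * B j z := by
      intro i j
      have h1 : (fun z : Fin d → ℤ => dgradM ε u z i j * dgradM ε u z j i)
          = fun z : Fin d → ℤ => (ε⁻¹ * ε⁻¹) *
              ((u (z + Pi.single j 1) i - u z i) * (u (z + Pi.single i 1) j - u z j)) := by
        funext z
        simp only [dgradM]
        ring
      rw [h1, tsum_mul_left]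
      congr 1
      exact KornAux.pair (f := fun z : Fin d → ℤ => u z i) (g := fun z : Fin d → ℤ => u z j)
        (atomFS0 i) (atomFS0 j) (Pi.single i 1) (Pi.single j 1)
    have sB : ∀ i j : Fin d, Summable fun z : Fin d → ℤ => B i z * B j z := by
      intro i j
      have hb : (fun z : Fin d → ℤ => B i z * B j z)
          = fun z : Fin d → ℤ => (u (z + 0) i - u (z + -(Pi.single i 1)) i)
              * (u (z + 0) j - u (z + -(Pi.single j 1)) j) := by
        funext z
        simp only [hB, add_zero, ← sub_eq_add_neg]
      rw [hb]
      exact sProd 0 (-(Pi.single i 1)) 0 (-(Pi.single j 1)) i j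
    have sqForm : ∑ i, ∑ j, ∑' z : Fin d → ℤ, B i z * B j z
        = ∑' z : Fin d → ℤ, (∑ i, B i z) ^ 2 := by
      have step1 : ∀ i : Fin d, ∑ j, ∑' z : Fin d → ℤ, B i z * B j z
          = ∑' z : Fin d → ℤ, ∑ j, B i z * B j z :=
        fun i => (Summable.tsum_finsetSum (fun j _ => sB i j)).symm
      calc ∑ i, ∑ j, ∑' z : Fin d → ℤ, B i z * B j z
          = ∑ i, ∑' z : Fin d → ℤ, ∑ j, B i z * B j z :=
            Finset.sum_congr rfl (fun i _ => step1 i)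
        _ = ∑' z : Fin d → ℤ, ∑ i, ∑ j, B i z * B j z :=
            (Summable.tsum_finsetSum (fun i _ => summable_sum (fun j _ => sB i j))).symm
        _ = ∑' z : Fin d → ℤ, (∑ i, B i z) ^ 2 :=
            tsum_congr (fun z => by rw [sq, Finset.sum_mul_sum])
    rw [swap]
    have hfin : ∑ i, ∑ j, ∑' z : Fin d → ℤ, dgradM ε u z i j * dgradM ε u z j i
        = (ε⁻¹ * ε⁻¹) * ∑' z : Fin d → ℤ, (∑ i, B i z) ^ 2 := by
      simp only [perPair]
      rw [← sqForm]
      simp only [← Finset.mul_sum]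
    rw [hfin]
    exact mul_nonneg (by positivity) (tsum_nonneg fun z => sq_nonneg _)
  have main : ∑' z : Fin d → ℤ, frobSq (dgradM ε u z)
      + ∑' z : Fin d → ℤ, ∑ i, ∑ j, dgradM ε u z i j * dgradM ε u z j i
      = 2 * ∑' z : Fin d → ℤ, frobSq (symPart (dgradM ε u z)) := by
    rw [← Summable.tsum_add sFrob sCrossSum, ← tsum_mul_left]
    exact tsum_congr fun z => frob_alg (dgradM ε u z)
  linarith [crossNonneg, main]
end
end

section
/- Strong monotonicity of the p-vector field: for every p ≥ 2 and all vectors w₁, w₂ ∈ ℝ^n, one has (|w₁|^{p−2}w₁ − |w₂|^{p−2}w₂) · (w₁ − w₂) ≥ (2/(p(2^{p−1}−1))) |w₁ − w₂|^p. -/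
open Real Filter
open scoped RealInnerProductSpace

section Aux

variable {E : Type*} [NormedAddCommGroup E] [InnerProductSpace ℝ E]

lemma sm_add_rpow {q a b : ℝ} (hq : 1 ≤ q) (ha : 0 ≤ a) (hb : 0 ≤ b) :
    a ^ q + b ^ q ≤ (a + b) ^ q := by
  rcases eq_or_lt_of_le ha with h | h
  · simp [← h, Real.zero_rpow (by linarith : q ≠ 0)]
  rcases eq_or_lt_of_le hb with h' | h'
  · simp [← h', Real.zero_rpow (by linarith : q ≠ 0)]
  have hab : 0 < a + b := by linarith
  have h1 : a ^ q = a * a ^ (q - 1) := by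
    rw [← Real.rpow_one_add' (le_of_lt h) (by linarith)]; ring_nf
  have h2 : b ^ q = b * b ^ (q - 1) := by
    rw [← Real.rpow_one_add' (le_of_lt h') (by linarith)]; ring_nf
  have h3 : (a + b) ^ q = (a + b) * (a + b) ^ (q - 1) := by
    rw [← Real.rpow_one_add' (le_of_lt hab) (by linarith)]; ring_nf
  rw [h1, h2, h3]
  have e1 : a ^ (q-1) ≤ (a+b) ^ (q-1) := Real.rpow_le_rpow ha (by linarith) (by linarith)
  have e2 : b ^ (q-1) ≤ (a+b) ^ (q-1) := Real.rpow_le_rpow hb (by linarith) (by linarith)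
  nlinarith

lemma sm_scalar {p s t : ℝ} (hp : 2 ≤ p) (hs : 0 ≤ s) (ht : 0 ≤ t) :
    s ^ p + p * s ^ (p - 1) * (t - s) ≤ t ^ p := by
  rcases eq_or_lt_of_le hs with h | h
  · rw [← h]
    rw [Real.zero_rpow (by linarith : p ≠ 0), Real.zero_rpow (by linarith : p - 1 ≠ 0)]
    simpa using Real.rpow_nonneg ht p
  · have hm1 : (-1 : ℝ) ≤ t / s - 1 := by
      have : 0 ≤ t / s := div_nonneg ht h.le
      linarith
    have hber := one_add_mul_self_le_rpow_one_add hm1 (p := p) (by linarith)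
    have hrw : (1 + (t / s - 1)) = t / s := by ring
    rw [hrw, Real.div_rpow ht h.le] at hber
    have hsp : (0:ℝ) < s ^ p := Real.rpow_pos_of_pos h p
    have key : (1 + p * (t / s - 1)) * s ^ p ≤ t ^ p := by
      calc (1 + p * (t / s - 1)) * s ^ p ≤ (t ^ p / s ^ p) * s ^ p :=
            mul_le_mul_of_nonneg_right hber hsp.le
        _ = t ^ p := by field_simp
    have hsub : s ^ (p - 1) = s ^ p / s := by
      rw [Real.rpow_sub h, Real.rpow_one]
    calc s ^ p + p * s ^ (p - 1) * (t - s)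
        = (1 + p * (t / s - 1)) * s ^ p := by
          rw [hsub]; field_simp
      _ ≤ t ^ p := key

-- L2 : Bregman nonnegativity
lemma sm_breg_nonneg {p : ℝ} (hp : 2 ≤ p) (a b : E) :
    0 ≤ ‖b‖ ^ p - ‖a‖ ^ p - p * ‖a‖ ^ (p - 2) * ⟪a, b - a⟫ := by
  rcases eq_or_ne a 0 with rfl | ha
  · simp [Real.zero_rpow (by linarith : p ≠ 0)]
    positivity
  · have hna : (0:ℝ) < ‖a‖ := norm_pos_iff.mpr ha
    have hinner : ⟪a, b - a⟫ = ⟪a, b⟫ - ‖a‖ ^ (2:ℝ) := by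
      rw [inner_sub_right, real_inner_self_eq_norm_sq]
      norm_num [Real.rpow_two]
    have h1 : ‖a‖ ^ (p-2) * ‖a‖ ^ (2:ℝ) = ‖a‖ ^ p := by
      rw [← Real.rpow_add hna]; ring_nf
    have h2 : ‖a‖ ^ (p-2) * ‖a‖ = ‖a‖ ^ (p-1) := by
      nth_rewrite 2 [← Real.rpow_one ‖a‖]
      rw [← Real.rpow_add hna]; ring_nf
    have hcs : ⟪a, b⟫ ≤ ‖a‖ * ‖b‖ := real_inner_le_norm a b
    have key := sm_scalar hp (norm_nonneg a) (norm_nonneg b)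
    have hmono : ‖a‖ ^ (p-2) * ⟪a, b⟫ ≤ ‖a‖ ^ (p-1) * ‖b‖ := by
      calc ‖a‖ ^ (p-2) * ⟪a, b⟫ ≤ ‖a‖ ^ (p-2) * (‖a‖ * ‖b‖) := by
            apply mul_le_mul_of_nonneg_left hcs (Real.rpow_nonneg (norm_nonneg a) _)
        _ = ‖a‖ ^ (p-1) * ‖b‖ := by rw [← mul_assoc, h2]
    have h3 : ‖a‖ ^ (p-1) * ‖a‖ = ‖a‖ ^ p := by
      nth_rewrite 2 [← Real.rpow_one ‖a‖]
      rw [← Real.rpow_add hna]; ring_nf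
    have hpn : (0:ℝ) < p := by linarith
    rw [hinner]
    nlinarith [mul_le_mul_of_nonneg_left hmono hpn.le, key, h1, h3]

lemma sm_rpow_half (p : ℝ) {z : ℝ} (hz : 0 ≤ z) : z ^ p = (z ^ (2:ℕ)) ^ (p/2) := by
  rw [← Real.rpow_natCast z 2, ← Real.rpow_mul hz,
    show ((2:ℕ):ℝ) * (p/2) = p by push_cast; ring]

-- L3 : Clarkson's inequality (Hilbert case, p ≥ 2)
lemma sm_clarkson {p : ℝ} (hp : 2 ≤ p) (u v : E) :
    ‖(1/2 : ℝ) • (u + v)‖ ^ p + ‖(1/2 : ℝ) • (u - v)‖ ^ p ≤ (‖u‖ ^ p + ‖v‖ ^ p) / 2 := by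
  have hq : (1:ℝ) ≤ p / 2 := by linarith
  set x := ‖(1/2 : ℝ) • (u + v)‖ with hx
  set y := ‖(1/2 : ℝ) • (u - v)‖ with hy
  have hxn : 0 ≤ x := norm_nonneg _
  have hyn : 0 ≤ y := norm_nonneg _
  have hpar : x ^ (2:ℕ) + y ^ (2:ℕ) = (‖u‖ ^ (2:ℕ) + ‖v‖ ^ (2:ℕ)) / 2 := by
    have h := parallelogram_law_with_norm ℝ u v
    have e1 : x = ‖u + v‖ / 2 := by
      rw [hx, norm_smul]; simp [Real.norm_eq_abs]; ring
    have e2 : y = ‖u - v‖ / 2 := by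
      rw [hy, norm_smul]; simp [Real.norm_eq_abs]; ring
    rw [e1, e2]; nlinarith [h]
  rw [sm_rpow_half p hxn, sm_rpow_half p hyn, sm_rpow_half p (norm_nonneg u),
    sm_rpow_half p (norm_nonneg v)]
  have h1 : (x ^ (2:ℕ)) ^ (p/2) + (y ^ (2:ℕ)) ^ (p/2) ≤ (x ^ (2:ℕ) + y ^ (2:ℕ)) ^ (p/2) :=
    sm_add_rpow hq (by positivity) (by positivity)
  have h2 : ((‖u‖ ^ (2:ℕ) + ‖v‖ ^ (2:ℕ)) / 2) ^ (p/2)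
      ≤ ((‖u‖ ^ (2:ℕ)) ^ (p/2) + (‖v‖ ^ (2:ℕ)) ^ (p/2)) / 2 := by
    have hcv := (convexOn_rpow (p := p/2) hq).2 (Set.mem_Ici.mpr (by positivity : (0:ℝ) ≤ ‖u‖ ^ (2:ℕ)))
      (Set.mem_Ici.mpr (by positivity : (0:ℝ) ≤ ‖v‖ ^ (2:ℕ)))
      (by norm_num : (0:ℝ) ≤ 1/2) (by norm_num : (0:ℝ) ≤ 1/2) (by norm_num)
    simp only [smul_eq_mul] at hcv
    calc ((‖u‖ ^ (2:ℕ) + ‖v‖ ^ (2:ℕ)) / 2) ^ (p/2)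
        = (1/2 * ‖u‖ ^ (2:ℕ) + 1/2 * ‖v‖ ^ (2:ℕ)) ^ (p/2) := by ring_nf
      _ ≤ 1/2 * (‖u‖ ^ (2:ℕ)) ^ (p/2) + 1/2 * (‖v‖ ^ (2:ℕ)) ^ (p/2) := hcv
      _ = ((‖u‖ ^ (2:ℕ)) ^ (p/2) + (‖v‖ ^ (2:ℕ)) ^ (p/2)) / 2 := by ring
  calc (x ^ (2:ℕ)) ^ (p/2) + (y ^ (2:ℕ)) ^ (p/2)
      ≤ (x ^ (2:ℕ) + y ^ (2:ℕ)) ^ (p/2) := h1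
    _ = ((‖u‖ ^ (2:ℕ) + ‖v‖ ^ (2:ℕ)) / 2) ^ (p/2) := by rw [hpar]
    _ ≤ _ := h2

-- L4 : midpoint improvement
lemma sm_mid {p : ℝ} (hp : 2 ≤ p) (a b : E) :
    ‖(1/2:ℝ) • (a + b)‖ ^ p - ‖a‖ ^ p - p * ‖a‖ ^ (p-2) * ⟪a, (1/2:ℝ) • (a + b) - a⟫ ≤
      (‖b‖ ^ p - ‖a‖ ^ p - p * ‖a‖ ^ (p-2) * ⟪a, b - a⟫) / 2 - ‖(1/2:ℝ) • (b - a)‖ ^ p := by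
  have hcl := sm_clarkson hp a b
  have hnn : ‖(1/2:ℝ) • (a - b)‖ = ‖(1/2:ℝ) • (b - a)‖ := by
    rw [← norm_neg]; congr 1; rw [← smul_neg, neg_sub]
  rw [hnn] at hcl
  have hmsub : (1/2:ℝ) • (a + b) - a = (1/2:ℝ) • (b - a) := by module
  rw [hmsub, real_inner_smul_right a (b - a) (1/2)]
  linarith

-- L5 : iteration
lemma sm_iter {p : ℝ} (hp : 2 ≤ p) (a : E) (k : ℕ) (b : E) :
    (2:ℝ) ^ (1 - p) * (∑ j ∈ Finset.range k, ((2:ℝ) ^ (1 - p)) ^ j) * ‖b - a‖ ^ p ≤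
      ‖b‖ ^ p - ‖a‖ ^ p - p * ‖a‖ ^ (p - 2) * ⟪a, b - a⟫ := by
  induction k generalizing b with
  | zero => simpa using sm_breg_nonneg hp a b
  | succ k ih =>
    have hmid := sm_mid hp a b
    have hih := ih ((1/2:ℝ) • (a + b))
    have hmsub : (1/2:ℝ) • (a + b) - a = (1/2:ℝ) • (b - a) := by module
    have hnorm : ‖(1/2:ℝ) • (b - a)‖ ^ p = (2:ℝ) ^ (-p) * ‖b - a‖ ^ p := by
      rw [norm_smul, Real.mul_rpow (by positivity) (norm_nonneg _)]
      congr 1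
      rw [Real.norm_eq_abs, abs_of_pos (by norm_num : (0:ℝ) < 1/2),
        show (1/2 : ℝ) = 2⁻¹ by norm_num,
        Real.inv_rpow (by norm_num : (0:ℝ) ≤ 2), ← Real.rpow_neg (by norm_num : (0:ℝ) ≤ 2)]
    rw [hmsub, real_inner_smul_right a (b - a) (1/2), hnorm] at hih hmid
    have e1 : (2:ℝ) * (2:ℝ) ^ (-p) = (2:ℝ) ^ (1 - p) := by
      nth_rewrite 1 [show (2:ℝ) = (2:ℝ) ^ (1:ℝ) by norm_num]
      rw [← Real.rpow_add (by norm_num : (0:ℝ) < 2)]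
      ring_nf
    have hsum : (∑ j ∈ Finset.range (k+1), ((2:ℝ) ^ (1 - p)) ^ j)
        = (2:ℝ)^(1-p) * (∑ j ∈ Finset.range k, ((2:ℝ) ^ (1 - p)) ^ j) + 1 :=
      geom_sum_succ
    rw [hsum]
    have key : (2:ℝ)^(1-p) * ((2:ℝ)^(1-p) * (∑ j ∈ Finset.range k, ((2:ℝ) ^ (1 - p)) ^ j) + 1)
          * ‖b - a‖ ^ p
        = 2*(((2:ℝ)^(1-p) * (∑ j ∈ Finset.range k, ((2:ℝ) ^ (1 - p)) ^ j)) * ((2:ℝ)^(-p) * ‖b - a‖ ^ p))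
          + 2*((2:ℝ)^(-p) * ‖b - a‖ ^ p) := by
      rw [← e1]; ring
    rw [key]
    linarith [hmid, hih]

-- L6 : Bregman lower bound
lemma sm_breg_lb {p : ℝ} (hp : 2 ≤ p) (a b : E) :
    ((2:ℝ) ^ (p-1) - 1)⁻¹ * ‖b - a‖ ^ p ≤
      ‖b‖ ^ p - ‖a‖ ^ p - p * ‖a‖ ^ (p - 2) * ⟪a, b - a⟫ := by
  set r := (2:ℝ) ^ (1 - p) with hr
  have hr0 : 0 ≤ r := Real.rpow_nonneg (by norm_num) _
  have hr1 : r < 1 := by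
    rw [hr]
    exact Real.rpow_lt_one_of_one_lt_of_neg (by norm_num) (by linarith)
  -- partial sums tend to (1 - r)⁻¹
  have hgeom : Tendsto (fun k => ∑ j ∈ Finset.range k, r ^ j) atTop (nhds (1 - r)⁻¹) := by
    have := (hasSum_geometric_of_lt_one hr0 hr1).tendsto_sum_nat
    simpa using this
  have hlim : Tendsto (fun k => r * (∑ j ∈ Finset.range k, r ^ j) * ‖b - a‖ ^ p) atTop
      (nhds (r * (1 - r)⁻¹ * ‖b - a‖ ^ p)) := by
    exact ((hgeom.const_mul r).mul_const _)
  have hle : r * (1 - r)⁻¹ * ‖b - a‖ ^ p ≤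
      ‖b‖ ^ p - ‖a‖ ^ p - p * ‖a‖ ^ (p - 2) * ⟪a, b - a⟫ :=
    le_of_tendsto hlim (Eventually.of_forall fun k => sm_iter hp a k b)
  have hconst : r * (1 - r)⁻¹ = ((2:ℝ) ^ (p-1) - 1)⁻¹ := by
    have hrpos : 0 < r := Real.rpow_pos_of_pos (by norm_num) _
    have hrinv : r⁻¹ = (2:ℝ) ^ (p-1) := by
      rw [hr, ← Real.rpow_neg (by norm_num : (0:ℝ) ≤ 2)]
      ring_nf
    have h1r : (0:ℝ) < 1 - r := by linarith
    have h2 : r⁻¹ - 1 = (1 - r) / r := by field_simp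
    rw [← hrinv, h2]
    rw [inv_div]
    field_simp
  rw [← hconst]
  exact hle

end Aux

/-!
**STATEMENT 14 (Strong monotonicity of the p-vector field).**
For every `p ≥ 2` and all vectors `w₁, w₂ ∈ ℝⁿ`, one has
`(|w₁|^{p−2}w₁ − |w₂|^{p−2}w₂) · (w₁ − w₂) ≥ (2/(p(2^{p−1}−1))) |w₁ − w₂|^p`.
Here `|·|` is the Euclidean norm and `·` the Euclidean inner product; for `w = 0`
the expression `|w|^{p−2}w` is interpreted as `0` (which is what
`‖w‖ ^ (p - 2) • w` evaluates to).
-/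
theorem strong_monotonicity_p_vector_field
    (n : ℕ) (p : ℝ) (hp : 2 ≤ p) (w₁ w₂ : EuclideanSpace ℝ (Fin n)) :
    (2 / (p * (2 ^ (p - 1) - 1))) * ‖w₁ - w₂‖ ^ p ≤
      @inner ℝ _ _ (‖w₁‖ ^ (p - 2) • w₁ - ‖w₂‖ ^ (p - 2) • w₂) (w₁ - w₂) := by
  have h1 := sm_breg_lb hp w₁ w₂
  have h2 := sm_breg_lb hp w₂ w₁
  have hnorm : ‖w₂ - w₁‖ = ‖w₁ - w₂‖ := norm_sub_rev _ _
  rw [hnorm] at h1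
  -- inner products
  have hi : @inner ℝ _ _ (‖w₁‖ ^ (p - 2) • w₁ - ‖w₂‖ ^ (p - 2) • w₂) (w₁ - w₂)
      = ‖w₁‖ ^ (p-2) * ⟪w₁, w₁ - w₂⟫ - ‖w₂‖ ^ (p-2) * ⟪w₂, w₁ - w₂⟫ := by
    rw [inner_sub_left, real_inner_smul_left, real_inner_smul_left]
  have hflip : ⟪w₁, w₂ - w₁⟫ = -⟪w₁, w₁ - w₂⟫ := by
    rw [← inner_neg_right, neg_sub]
  rw [hflip] at h1
  have hppos : (0:ℝ) < p := by linarith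
  have hcpos : (0:ℝ) < (2:ℝ) ^ (p-1) - 1 := by
    have : (1:ℝ) < (2:ℝ) ^ (p-1) := by
      rw [show (1:ℝ) = (2:ℝ) ^ (0:ℝ) by norm_num]
      exact Real.rpow_lt_rpow_left_iff (by norm_num) |>.mpr (by linarith)
    linarith
  -- sum of the two Bregman bounds
  have hsum : 2 * ((2:ℝ) ^ (p-1) - 1)⁻¹ * ‖w₁ - w₂‖ ^ p ≤
      p * (‖w₁‖ ^ (p-2) * ⟪w₁, w₁ - w₂⟫ - ‖w₂‖ ^ (p-2) * ⟪w₂, w₁ - w₂⟫) := by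
    nlinarith [h1, h2]
  rw [hi]
  rw [div_mul_eq_mul_div, div_le_iff₀ (by positivity)]
  have hCne : ((2:ℝ) ^ (p-1) - 1) ≠ 0 := ne_of_gt hcpos
  calc 2 * ‖w₁ - w₂‖ ^ p
      = (2 * ((2:ℝ) ^ (p-1) - 1)⁻¹ * ‖w₁ - w₂‖ ^ p) * ((2:ℝ) ^ (p-1) - 1) := by
        field_simp
    _ ≤ (p * (‖w₁‖ ^ (p-2) * ⟪w₁, w₁ - w₂⟫ - ‖w₂‖ ^ (p-2) * ⟪w₂, w₁ - w₂⟫)) * ((2:ℝ) ^ (p-1) - 1) :=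
        mul_le_mul_of_nonneg_right hsum hcpos.le
    _ = (‖w₁‖ ^ (p-2) * ⟪w₁, w₁ - w₂⟫ - ‖w₂‖ ^ (p-2) * ⟪w₂, w₁ - w₂⟫) * (p * ((2:ℝ) ^ (p-1) - 1)) := by
        ring
end

section
/- Lindqvist's inequality: for every p ≥ 2 and all vectors w₁, w₂ ∈ ℝ^n, one has |w₂|^p ≥ |w₁|^p + p|w₁|^{p−2} w₁ · (w₂ − w₁) + |w₂ − w₁|^p/(2^{p−1}−1). -/
open Real Filter

section helpers

variable {E : Type*} [NormedAddCommGroup E] [InnerProductSpace ℝ E]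

local notation "⟪" x ", " y "⟫" => @inner ℝ _ _ x y

/-- superadditivity of rpow -/
lemma aux_superadd {x y r : ℝ} (hx : 0 ≤ x) (hy : 0 ≤ y) (hr : 1 ≤ r) :
    x ^ r + y ^ r ≤ (x + y) ^ r := by
  lift x to NNReal using hx
  lift y to NNReal using hy
  exact_mod_cast NNReal.add_rpow_le_rpow_add x y hr

/-- midpoint convexity of rpow -/
lemma aux_midpt {x y r : ℝ} (hx : 0 ≤ x) (hy : 0 ≤ y) (hr : 1 ≤ r) :
    ((1:ℝ)/2 * x + 1/2 * y) ^ r ≤ 1/2 * x ^ r + 1/2 * y ^ r := by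
  have h := Real.rpow_arith_mean_le_arith_mean_rpow Finset.univ ![1/2, 1/2] ![x, y]
    (by intro i _; fin_cases i <;> norm_num) (by norm_num [Fin.sum_univ_succ])
    (by intro i _; fin_cases i <;> assumption) hr
  simpa [Fin.sum_univ_succ] using h

/-- scalar gradient inequality -/
lemma aux_grad_scalar {a b q : ℝ} (ha : 0 ≤ a) (hb : 0 ≤ b) (hq : 2 ≤ q) :
    a ^ q + q * a ^ (q - 1) * (b - a) ≤ b ^ q := by
  have hq1 : (1:ℝ) ≤ q := by linarith
  rcases eq_or_lt_of_le ha with h0 | h0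
  · rw [← h0]
    rw [Real.zero_rpow (by linarith : q ≠ 0), Real.zero_rpow (by linarith : q - 1 ≠ 0)]
    simpa using Real.rpow_nonneg hb q
  · have hsa : -1 ≤ b / a - 1 := by
      have : 0 ≤ b / a := div_nonneg hb h0.le
      linarith
    have hber := one_add_mul_self_le_rpow_one_add hsa hq1
    have key : (1 + (b / a - 1)) ^ q = b ^ q / a ^ q := by
      rw [show 1 + (b / a - 1) = b / a by ring, Real.div_rpow hb h0.le]
    rw [key] at hber
    have hap : 0 < a ^ q := Real.rpow_pos_of_pos h0 q
    have := (mul_le_mul_of_nonneg_left hber hap.le)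
    have hrw : a ^ q * (1 + q * (b / a - 1)) = a ^ q + q * a ^ (q - 1) * (b - a) := by
      have h1 : a ^ q * (b / a - 1) = a ^ (q - 1) * (b - a) := by
        have : a ^ (q - 1) = a ^ q / a := by
          rw [Real.rpow_sub h0, Real.rpow_one]
        rw [this]
        field_simp
      ring_nf
      ring_nf at h1
      nlinarith [h1]
    rw [hrw] at this
    calc a ^ q + q * a ^ (q - 1) * (b - a) ≤ a ^ q * (b ^ q / a ^ q) := this
      _ = b ^ q := by field_simp

/-- vector gradient (subgradient) inequality -/
lemma aux_grad {p : ℝ} (hp : 2 ≤ p) (u v : E) :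
    ‖u‖ ^ p + p * ‖u‖ ^ (p - 2) * ⟪u, v - u⟫ ≤ ‖v‖ ^ p := by
  have hinner : ⟪u, v - u⟫ = ⟪u, v⟫ - ‖u‖ ^ (2:ℕ) := by
    rw [inner_sub_right, real_inner_self_eq_norm_sq]
  rcases eq_or_lt_of_le (norm_nonneg u) with h0 | h0
  · rw [← h0]
    have hu : u = 0 := norm_eq_zero.mp h0.symm
    simp [hu, Real.zero_rpow (by linarith : p ≠ 0)]
    positivity
  · have h1 : p * ‖u‖ ^ (p - 2) * ⟪u, v - u⟫
        ≤ p * ‖u‖ ^ (p - 2) * (‖u‖ * ‖v‖ - ‖u‖ ^ (2:ℕ)) := by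
      apply mul_le_mul_of_nonneg_left _ (by positivity)
      rw [hinner]
      have := real_inner_le_norm u v
      linarith
    have h2 : p * ‖u‖ ^ (p - 2) * (‖u‖ * ‖v‖ - ‖u‖ ^ (2:ℕ))
        = p * ‖u‖ ^ (p - 1) * (‖v‖ - ‖u‖) := by
      have e1 : ‖u‖ ^ (p - 2) * ‖u‖ = ‖u‖ ^ (p - 1) := by
        rw [show p - 1 = (p - 2) + 1 by ring, Real.rpow_add h0, Real.rpow_one]
      have e2 : (‖u‖ : ℝ) ^ (2:ℕ) = ‖u‖ * ‖u‖ := sq ‖u‖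
      rw [e2, ← e1]; ring
    have h3 := aux_grad_scalar (norm_nonneg u) (norm_nonneg v) hp
    calc ‖u‖ ^ p + p * ‖u‖ ^ (p - 2) * ⟪u, v - u⟫
        ≤ ‖u‖ ^ p + p * ‖u‖ ^ (p - 1) * (‖v‖ - ‖u‖) := by rw [← h2]; linarith
      _ ≤ ‖v‖ ^ p := h3

/-- Clarkson-type inequality -/
lemma aux_clarkson {p : ℝ} (hp : 2 ≤ p) (a b : E) :
    ‖(1/2 : ℝ) • (a + b)‖ ^ p + ‖(1/2 : ℝ) • (a - b)‖ ^ p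
      ≤ (‖a‖ ^ p + ‖b‖ ^ p) / 2 := by
  set u := (1/2 : ℝ) • (a + b)
  set v := (1/2 : ℝ) • (a - b)
  have hpar : ‖u‖ ^ (2:ℕ) + ‖v‖ ^ (2:ℕ) = 1/2 * ‖a‖ ^ (2:ℕ) + 1/2 * ‖b‖ ^ (2:ℕ) := by
    have hP := parallelogram_law_with_norm ℝ a b
    have hu : ‖u‖ = (1/2) * ‖a + b‖ := by
      rw [norm_smul]; simp
    have hv : ‖v‖ = (1/2) * ‖a - b‖ := by
      rw [norm_smul]; simp
    rw [hu, hv]; ring_nf; ring_nf at hP; nlinarith [hP]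
  have hp2 : (1:ℝ) ≤ p / 2 := by linarith
  have sqp : ∀ x : ℝ, 0 ≤ x → (x ^ (2:ℕ)) ^ (p/2) = x ^ p := by
    intro x hx
    rw [← Real.rpow_natCast x 2, ← Real.rpow_mul hx, show ((2:ℕ):ℝ)*(p/2) = p by push_cast; ring]
  calc ‖u‖ ^ p + ‖v‖ ^ p
      = (‖u‖ ^ (2:ℕ)) ^ (p/2) + (‖v‖ ^ (2:ℕ)) ^ (p/2) := by
        rw [sqp _ (norm_nonneg u), sqp _ (norm_nonneg v)]
    _ ≤ (‖u‖ ^ (2:ℕ) + ‖v‖ ^ (2:ℕ)) ^ (p/2) :=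
        aux_superadd (by positivity) (by positivity) hp2
    _ = (1/2 * ‖a‖ ^ (2:ℕ) + 1/2 * ‖b‖ ^ (2:ℕ)) ^ (p/2) := by rw [hpar]
    _ ≤ 1/2 * (‖a‖ ^ (2:ℕ)) ^ (p/2) + 1/2 * (‖b‖ ^ (2:ℕ)) ^ (p/2) :=
        aux_midpt (by positivity) (by positivity) hp2
    _ = (‖a‖ ^ p + ‖b‖ ^ p) / 2 := by
        rw [sqp _ (norm_nonneg a), sqp _ (norm_nonneg b)]; ring

end helpers

theorem lindqvist_inequality
    (n : ℕ) (p : ℝ) (hp : 2 ≤ p) (w₁ w₂ : EuclideanSpace ℝ (Fin n)) :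
    ‖w₁‖ ^ p + p * @inner ℝ _ _ (‖w₁‖ ^ (p - 2) • w₁) (w₂ - w₁)
        + ‖w₂ - w₁‖ ^ p / (2 ^ (p - 1) - 1) ≤ ‖w₂‖ ^ p := by
  set h := w₂ - w₁ with hh
  set L : ℝ := p * ‖w₁‖ ^ (p - 2) * (@inner ℝ _ _ w₁ h) with hL
  set f : ℝ → ℝ := fun t => ‖w₁ + t • h‖ ^ p - ‖w₁‖ ^ p - t * L with hf
  have hf_nonneg : ∀ t : ℝ, 0 ≤ f t := by
    intro t
    have hg := aux_grad hp w₁ (w₁ + t • h)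
    rw [add_sub_cancel_left, inner_smul_right] at hg
    have e : t * L = p * ‖w₁‖ ^ (p - 2) * (t * @inner ℝ _ _ w₁ h) := by rw [hL]; ring
    simp only [hf]
    linarith [hg, e.ge, e.le]
  have step : ∀ t : ℝ, 0 ≤ t → f (t / 2) ≤ f t / 2 - (t / 2) ^ p * ‖h‖ ^ p := by
    intro t ht
    have hc := aux_clarkson hp w₁ (w₁ + t • h)
    have e1 : (1/2 : ℝ) • (w₁ + (w₁ + t • h)) = w₁ + (t/2) • h := by
      rw [smul_add, smul_add]
      rw [show (t/2) • h = ((1:ℝ)/2) • (t • h) by rw [smul_smul]; ring_nf]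
      rw [show (1/2 : ℝ) • w₁ + ((1/2 : ℝ) • w₁ + (1/2 : ℝ) • (t • h))
            = ((1/2 : ℝ) + (1/2 : ℝ)) • w₁ + (1/2 : ℝ) • (t • h) by rw [add_smul]; abel]
      norm_num
    have e2 : (1/2 : ℝ) • (w₁ - (w₁ + t • h)) = -((t/2) • h) := by
      rw [show w₁ - (w₁ + t • h) = -(t • h) by abel, smul_neg, smul_smul]
      ring_nf
    rw [e1, e2, norm_neg] at hc
    have e3 : ‖(t/2) • h‖ ^ p = (t/2) ^ p * ‖h‖ ^ p := by
      rw [norm_smul, Real.norm_eq_abs, abs_of_nonneg (by linarith),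
        Real.mul_rpow (by linarith) (norm_nonneg h)]
    rw [e3] at hc
    simp only [hf]
    have e4 : (t/2) * L = t * L / 2 := by ring
    linarith [hc, e4.le, e4.ge]
  set q : ℝ := 2 ^ (1 - p) with hq
  have hq0 : 0 < q := Real.rpow_pos_of_pos two_pos _
  have hq1 : q < 1 := Real.rpow_lt_one_of_one_lt_of_neg one_lt_two (by linarith)
  have tpos : ∀ m : ℕ, (0:ℝ) < (2:ℝ) ^ (-(m:ℝ)) := fun m => Real.rpow_pos_of_pos two_pos _
  have hqpow : ∀ m : ℕ, (2:ℝ) ^ m * ((2:ℝ) ^ (-(m:ℝ))) ^ p = q ^ m := by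
    intro m
    rw [← Real.rpow_natCast (2:ℝ) m, ← Real.rpow_natCast q m, hq,
      ← Real.rpow_mul (by norm_num : (0:ℝ) ≤ 2), ← Real.rpow_mul (by norm_num : (0:ℝ) ≤ 2),
      ← Real.rpow_add two_pos]
    ring_nf
  have thalf : ∀ m : ℕ, (2:ℝ) ^ (-(m:ℝ)) / 2 = (2:ℝ) ^ (-((m+1:ℕ):ℝ)) := by
    intro m
    rw [show -((m+1:ℕ):ℝ) = -(m:ℝ) + (-1) by push_cast; ring, Real.rpow_add two_pos,
      Real.rpow_neg_one]
    ring
  have main : ∀ K : ℕ, (2:ℝ) ^ K * f ((2:ℝ) ^ (-(K:ℝ)))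
      + ‖h‖ ^ p * ∑ j ∈ Finset.range K, q ^ (j+1) ≤ f 1 := by
    intro K
    induction K with
    | zero => simp
    | succ k ih =>
      have hstep := step ((2:ℝ) ^ (-(k:ℝ))) (tpos k).le
      rw [thalf k] at hstep
      have hmul := mul_le_mul_of_nonneg_left hstep
        (by positivity : (0:ℝ) ≤ (2:ℝ) ^ (k+1))
      have e5 : (2:ℝ) ^ (k+1) * (f ((2:ℝ) ^ (-(k:ℝ))) / 2
            - ((2:ℝ) ^ (-((k+1:ℕ):ℝ))) ^ p * ‖h‖ ^ p)
          = (2:ℝ) ^ k * f ((2:ℝ) ^ (-(k:ℝ))) - q ^ (k+1) * ‖h‖ ^ p := by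
        rw [← hqpow (k+1)]
        ring
      rw [e5] at hmul
      rw [Finset.sum_range_succ]
      have : ‖h‖ ^ p * (∑ j ∈ Finset.range k, q ^ (j+1) + q ^ (k+1))
          = ‖h‖ ^ p * ∑ j ∈ Finset.range k, q ^ (j+1) + q ^ (k+1) * ‖h‖ ^ p := by ring
      rw [this]
      linarith [hmul, ih]
  have key : ∀ K : ℕ, ‖h‖ ^ p * ∑ j ∈ Finset.range K, q ^ (j+1) ≤ f 1 := by
    intro K
    have h1 := main K
    have h2 : 0 ≤ (2:ℝ) ^ K * f ((2:ℝ) ^ (-(K:ℝ))) :=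
      mul_nonneg (by positivity) (hf_nonneg _)
    linarith
  have hsum : HasSum (fun j : ℕ => q ^ (j+1)) (q * (1 - q)⁻¹) := by
    have := (hasSum_geometric_of_lt_one hq0.le hq1).mul_left q
    simpa [pow_succ'] using this
  have htendsto : Tendsto (fun K => ‖h‖ ^ p * ∑ j ∈ Finset.range K, q ^ (j+1))
      atTop (nhds (‖h‖ ^ p * (q * (1 - q)⁻¹))) :=
    hsum.tendsto_sum_nat.const_mul _
  have hlim : ‖h‖ ^ p * (q * (1 - q)⁻¹) ≤ f 1 := le_of_tendsto' htendsto key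
  have hq2 : (2:ℝ) ^ (p - 1) = q⁻¹ := by
    rw [hq, show (1:ℝ) - p = -(p-1) by ring, Real.rpow_neg (by norm_num : (0:ℝ) ≤ 2), inv_inv]
  have hfrac : ‖h‖ ^ p * (q * (1 - q)⁻¹) = ‖h‖ ^ p / (2 ^ (p - 1) - 1) := by
    rw [hq2]
    have hqne : q ≠ 0 := hq0.ne'
    have h1q : 1 - q ≠ 0 := by linarith
    have h3 : q⁻¹ - 1 ≠ 0 := by
      have : 1 < q⁻¹ := (one_lt_inv₀ hq0).mpr hq1
      linarith
    field_simp
  rw [hfrac] at hlim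
  have hinner : @inner ℝ _ _ (‖w₁‖ ^ (p - 2) • w₁) h = ‖w₁‖ ^ (p - 2) * @inner ℝ _ _ w₁ h :=
    real_inner_smul_left _ _ _
  have hf1 : f 1 = ‖w₂‖ ^ p - ‖w₁‖ ^ p - L := by
    simp only [hf, one_smul, one_mul]
    rw [hh, add_sub_cancel]
  rw [hf1] at hlim
  rw [hinner]
  have : p * (‖w₁‖ ^ (p - 2) * @inner ℝ _ _ w₁ h) = L := by rw [hL]; ring
  linarith [this.le, this.ge]
end

section
/- Bihari's inequality: let a < b, let Y, F: [a,b] → (0,∞) be continuous, let k ≥ 0 and M ≥ 0, and let w: [0,∞) → (0,∞) be continuous and non-decreasing. Fix u₀ > 0 and define Φ(u) = ∫_{u₀}^{u} dt/w(t) for u ≥ 0, which is strictly increasing. If Y(x) ≤ k + M ∫_a^x F(t) w(Y(t)) dt for all x ∈ [a,b], then for every x ∈ [a,b] such that Φ(k) + M ∫_a^x F(t) dt lies in the range of Φ, one has Y(x) ≤ Φ^{-1}( Φ(k) + M ∫_a^x F(t) dt ). -/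
open MeasureTheory Set intervalIntegral


/-!
**STATEMENT 16 (Bihari's inequality).**
Let `a < b`, let `Y, F : [a,b] → (0,∞)` be continuous, let `k ≥ 0` and `M ≥ 0`,
and let `w : [0,∞) → (0,∞)` be continuous and non-decreasing.  Fix `u₀ > 0` and
define `Φ(u) = ∫_{u₀}^u dt/w(t)` for `u ≥ 0`, which is strictly increasing.
If `Y(x) ≤ k + M ∫_a^x F(t) w(Y(t)) dt` for all `x ∈ [a,b]`, then for every
`x ∈ [a,b]` such that `Φ(k) + M ∫_a^x F(t) dt` lies in the range of `Φ`
(i.e. equals `Φ(v)` for some `v ≥ 0`), one has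
`Y(x) ≤ Φ⁻¹(Φ(k) + M ∫_a^x F(t) dt) = v`.
The strict monotonicity of `Φ` on `[0,∞)` is part of the conclusion, so that
`Φ⁻¹` is well defined on the range of `Φ`.
-/
theorem bihari_inequality
    (a b : ℝ) (hab : a < b) (Y F : ℝ → ℝ)
    (hYc : ContinuousOn Y (Set.Icc a b)) (hFc : ContinuousOn F (Set.Icc a b))
    (hYpos : ∀ x ∈ Set.Icc a b, 0 < Y x) (hFpos : ∀ x ∈ Set.Icc a b, 0 < F x)
    (k M : ℝ) (hk : 0 ≤ k) (hM : 0 ≤ M)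
    (w : ℝ → ℝ) (hwc : ContinuousOn w (Set.Ici 0))
    (hwpos : ∀ u ∈ Set.Ici (0:ℝ), 0 < w u) (hwmono : MonotoneOn w (Set.Ici 0))
    (u₀ : ℝ) (hu₀ : 0 < u₀)
    (Φ : ℝ → ℝ) (hΦ : ∀ u : ℝ, Φ u = ∫ s in u₀..u, (w s)⁻¹)
    (hmain : ∀ x ∈ Set.Icc a b, Y x ≤ k + M * ∫ s in a..x, F s * w (Y s)) :
    StrictMonoOn Φ (Set.Ici 0) ∧
      ∀ x ∈ Set.Icc a b, ∀ v ∈ Set.Ici (0:ℝ),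
        Φ v = Φ k + M * ∫ s in a..x, F s → Y x ≤ v := by
  have hΦfun : Φ = fun u => ∫ s in u₀..u, (w s)⁻¹ := funext hΦ
  subst hΦfun
  have hwne : ∀ u ∈ Set.Ici (0:ℝ), w u ≠ 0 := fun u hu => (hwpos u hu).ne'
  have hinvc : ContinuousOn (fun s => (w s)⁻¹) (Set.Ici 0) := hwc.inv₀ hwne
  have hint : ∀ x y : ℝ, 0 ≤ x → 0 ≤ y →
      IntervalIntegrable (fun s => (w s)⁻¹) volume x y := by
    intro x y hx hy
    exact ((hinvc.mono (fun s hs => le_trans (le_min hx hy) hs.1)).intervalIntegrable)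
  have hmono : StrictMonoOn (fun u => ∫ s in u₀..u, (w s)⁻¹) (Set.Ici 0) := by
    intro x hx y hy hxy
    have h1 := hint u₀ x hu₀.le hx
    have h2 := hint u₀ y hu₀.le hy
    have h3 := hint x y hx hy
    have hsub : (∫ s in u₀..y, (w s)⁻¹) - (∫ s in u₀..x, (w s)⁻¹) = ∫ s in x..y, (w s)⁻¹ :=
      intervalIntegral.integral_interval_sub_left h2 h1
    have hpos : 0 < ∫ s in x..y, (w s)⁻¹ :=
      intervalIntegral.intervalIntegral_pos_of_pos_on h3
        (fun s hs => inv_pos.2 (hwpos s (le_trans hx hs.1.le))) hxy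
    simp only []
    linarith
  refine ⟨hmono, ?_⟩
  intro x hx v hv hΦv
  set f : ℝ → ℝ := fun s => F s * w (Y s) with hf
  have hfc : ContinuousOn f (Set.Icc a b) :=
    hFc.mul (hwc.comp hYc (fun s hs => (hYpos s hs).le))
  have hfpos : ∀ s ∈ Set.Icc a b, 0 < f s :=
    fun s hs => mul_pos (hFpos s hs) (hwpos _ (hYpos s hs).le)
  have hfii : ∀ c d, c ∈ Set.Icc a b → d ∈ Set.Icc a b → IntervalIntegrable f volume c d :=
    fun c d hc hd => (hfc.mono (Set.uIcc_subset_Icc hc hd)).intervalIntegrable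
  have hFii : ∀ c d, c ∈ Set.Icc a b → d ∈ Set.Icc a b → IntervalIntegrable F volume c d :=
    fun c d hc hd => (hFc.mono (Set.uIcc_subset_Icc hc hd)).intervalIntegrable
  have hamem : a ∈ Set.Icc a b := ⟨le_refl a, hab.le⟩
  have hbmem : b ∈ Set.Icc a b := ⟨hab.le, le_refl b⟩
  set R : ℝ → ℝ := fun t => k + M * ∫ s in a..t, f s with hRdef
  have hRa : R a = k := by simp [hRdef]
  have hYR : ∀ y ∈ Set.Icc a b, Y y ≤ R y := hmain
  have hintnn : ∀ y ∈ Set.Icc a b, 0 ≤ ∫ s in a..y, f s := by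
    intro y hy
    exact intervalIntegral.integral_nonneg hy.1
      (fun s hs => (hfpos s ⟨hs.1, le_trans hs.2 hy.2⟩).le)
  have hR0 : ∀ y ∈ Set.Icc a b, 0 ≤ R y := by
    intro y hy
    have := hintnn y hy
    have : 0 ≤ M * ∫ s in a..y, f s := mul_nonneg hM this
    simp only [hRdef]; linarith
  have hkM : 0 < k ∨ 0 < M := by
    by_contra h
    push_neg at h
    have hk0 : k = 0 := le_antisymm h.1 hk
    have hM0 : M = 0 := le_antisymm h.2 hM
    have := hmain a hamem
    simp [hk0, hM0] at this
    exact absurd this (not_le.2 (hYpos a hamem))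
  have hRpos : ∀ y ∈ Set.Ioo a b, 0 < R y := by
    intro y hy
    rcases hkM with hk' | hM'
    · have := mul_nonneg hM (hintnn y ⟨hy.1.le, hy.2.le⟩)
      simp only [hRdef]; linarith
    · have hpos : 0 < ∫ s in a..y, f s :=
        intervalIntegral.intervalIntegral_pos_of_pos_on
          (hfii a y hamem ⟨hy.1.le, hy.2.le⟩)
          (fun s hs => hfpos s ⟨hs.1.le, le_trans hs.2.le hy.2.le⟩) hy.1
      have := mul_pos hM' hpos
      simp only [hRdef]; linarith
  -- derivatives
  have hRderiv : ∀ y ∈ Set.Ioo a b, HasDerivAt R (M * f y) y := by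
    intro y hy
    have h1 : HasDerivAt (fun t => ∫ s in a..t, f s) (f y) y := by
      apply intervalIntegral.integral_hasDerivAt_right (hfii a y hamem ⟨hy.1.le, hy.2.le⟩)
      · exact ContinuousOn.stronglyMeasurableAtFilter isOpen_Ioo
          (hfc.mono Set.Ioo_subset_Icc_self) y hy
      · exact hfc.continuousAt (Icc_mem_nhds hy.1 hy.2)
    exact ((h1.const_mul M).const_add k)
  have hFderiv : ∀ y ∈ Set.Ioo a b, HasDerivAt (fun t => ∫ s in a..t, F s) (F y) y := by
    intro y hy
    apply intervalIntegral.integral_hasDerivAt_right (hFii a y hamem ⟨hy.1.le, hy.2.le⟩)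
    · exact ContinuousOn.stronglyMeasurableAtFilter isOpen_Ioo
        (hFc.mono Set.Ioo_subset_Icc_self) y hy
    · exact hFc.continuousAt (Icc_mem_nhds hy.1 hy.2)
  have hΦderiv : ∀ p : ℝ, 0 < p →
      HasDerivAt (fun u => ∫ s in u₀..u, (w s)⁻¹) (w p)⁻¹ p := by
    intro p hp
    apply intervalIntegral.integral_hasDerivAt_right (hint u₀ p hu₀.le hp.le)
    · exact ContinuousOn.stronglyMeasurableAtFilter isOpen_Ioi
        (hinvc.mono Set.Ioi_subset_Ici_self) p hp
    · exact (hinvc.mono Set.Ioi_subset_Ici_self).continuousAt (Ioi_mem_nhds hp)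
  set g : ℝ → ℝ := fun t => M * (∫ s in a..t, F s) - ∫ s in u₀..(R t), (w s)⁻¹ with hgdef
  have hgderiv : ∀ y ∈ Set.Ioo a b,
      HasDerivAt g (M * F y - (w (R y))⁻¹ * (M * f y)) y := by
    intro y hy
    have hc : HasDerivAt (fun t => ∫ s in u₀..(R t), (w s)⁻¹) ((w (R y))⁻¹ * (M * f y)) y :=
      (hΦderiv (R y) (hRpos y hy)).comp y (hRderiv y hy)
    exact ((hFderiv y hy).const_mul M).sub hc
  -- continuity of g on [a,b]
  have hTb : ∀ y ∈ Set.Icc a b, (∫ s in a..y, f s) ≤ ∫ s in a..b, f s := by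
    intro y hy
    have hadd := intervalIntegral.integral_add_adjacent_intervals
      (hfii a y hamem hy) (hfii y b hy hbmem)
    have hnn : 0 ≤ ∫ s in y..b, f s :=
      intervalIntegral.integral_nonneg hy.2 (fun s hs => (hfpos s ⟨le_trans hy.1 hs.1, hs.2⟩).le)
    linarith
  set T : ℝ := max (k + M * ∫ s in a..b, f s) u₀ with hTdef
  have hT0 : (0:ℝ) ≤ T := le_trans hu₀.le (le_max_right _ _)
  have hRmaps : ∀ y ∈ Set.Icc a b, R y ∈ Set.Icc 0 T := by
    intro y hy
    refine ⟨hR0 y hy, ?_⟩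
    have h1 := hTb y hy
    have h2 : M * (∫ s in a..y, f s) ≤ M * ∫ s in a..b, f s := mul_le_mul_of_nonneg_left h1 hM
    have h3 : k + M * ∫ s in a..b, f s ≤ T := le_max_left _ _
    simp only [hRdef]; linarith
  have hΦcont : ContinuousOn (fun u => ∫ s in u₀..u, (w s)⁻¹) (Set.Icc 0 T) := by
    have h := intervalIntegral.continuousOn_primitive_interval' (hint 0 T le_rfl hT0)
      (by rw [Set.uIcc_of_le hT0]; exact ⟨hu₀.le, le_max_right _ _⟩)
    rwa [Set.uIcc_of_le hT0] at h
  have hRcont : ContinuousOn R (Set.Icc a b) := by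
    have h := intervalIntegral.continuousOn_primitive_interval'
      (hfii a b hamem hbmem) (by rw [Set.uIcc_of_le hab.le]; exact hamem)
    rw [Set.uIcc_of_le hab.le] at h
    exact continuousOn_const.add (h.const_smul M)
  have hFprim : ContinuousOn (fun t => ∫ s in a..t, F s) (Set.Icc a b) := by
    have h := intervalIntegral.continuousOn_primitive_interval'
      (hFii a b hamem hbmem) (by rw [Set.uIcc_of_le hab.le]; exact hamem)
    rwa [Set.uIcc_of_le hab.le] at h
  have hgcont : ContinuousOn g (Set.Icc a b) :=
    (hFprim.const_smul M).sub (hΦcont.comp hRcont hRmaps)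
  have hgmono : MonotoneOn g (Set.Icc a b) := by
    apply monotoneOn_of_deriv_nonneg (convex_Icc a b) hgcont
    · rw [interior_Icc]
      exact fun y hy => (hgderiv y hy).differentiableAt.differentiableWithinAt
    · rw [interior_Icc]
      intro y hy
      rw [(hgderiv y hy).deriv]
      have hymem : y ∈ Set.Icc a b := ⟨hy.1.le, hy.2.le⟩
      have hY0 : (0:ℝ) ≤ Y y := (hYpos y hymem).le
      have hR0' : (0:ℝ) ≤ R y := hR0 y hymem
      have hwle : w (Y y) ≤ w (R y) := hwmono hY0 hR0' (hYR y hymem)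
      have hwR : 0 < w (R y) := hwpos _ hR0'
      have hFy : 0 < F y := hFpos y hymem
      have h1 : (w (R y))⁻¹ * (M * f y) ≤ (w (R y))⁻¹ * (M * (F y * w (R y))) := by
        apply mul_le_mul_of_nonneg_left _ (inv_nonneg.2 hwR.le)
        simp only [hf]
        exact mul_le_mul_of_nonneg_left (mul_le_mul_of_nonneg_left hwle hFy.le) hM
      have h2 : (w (R y))⁻¹ * (M * (F y * w (R y))) = M * F y := by
        field_simp
      linarith
  have hga : g a = -(∫ s in u₀..k, (w s)⁻¹) := by
    simp [hgdef, hRa]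
  have hgx := hgmono hamem hx hx.1
  rw [hga] at hgx
  -- Φ (R x) ≤ Φ v
  have hkey : (∫ s in u₀..(R x), (w s)⁻¹) ≤ ∫ s in u₀..v, (w s)⁻¹ := by
    simp only [hgdef] at hgx
    simp only [] at hΦv
    linarith
  have hRxv : R x ≤ v := by
    by_contra h
    push_neg at h
    have := hmono hv (hR0 x hx) h
    simp only [] at this
    linarith
  exact le_trans (hYR x hx) hRxv
end

section
/- Integral comparison lemma (core of the Lipschitz-continuity proof): let t > 0, A ≥ 0, and let δ: [0,t] → [0,∞) be continuous and satisfy δ(s)² ≤ A ∫_s^t δ(τ) dτ for every s ∈ [0,t]. Then δ(s) ≤ (A/2)(t − s) for every s ∈ [0,t]. -/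
/-!
**STATEMENT 17 (Integral comparison lemma).**
Let `t > 0`, `A ≥ 0`, and let `δ : [0,t] → [0,∞)` be continuous and satisfy
`δ(s)² ≤ A ∫_s^t δ(τ) dτ` for every `s ∈ [0,t]`.  Then
`δ(s) ≤ (A/2)(t − s)` for every `s ∈ [0,t]`.
-/
theorem integral_comparison_lemma
    (t : ℝ) (ht : 0 < t) (A : ℝ) (hA : 0 ≤ A) (δ : ℝ → ℝ)
    (hcont : ContinuousOn δ (Set.Icc 0 t))
    (hnn : ∀ s ∈ Set.Icc (0:ℝ) t, 0 ≤ δ s)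
    (hineq : ∀ s ∈ Set.Icc (0:ℝ) t, δ s ^ 2 ≤ A * ∫ τ in s..t, δ τ) :
    ∀ s ∈ Set.Icc (0:ℝ) t, δ s ≤ (A / 2) * (t - s) := by
  -- clamped extension of δ
  set g : ℝ → ℝ := fun τ => δ (max 0 (min τ t)) with hg_def
  have hclamp_mem : ∀ τ : ℝ, max 0 (min τ t) ∈ Set.Icc (0:ℝ) t := fun τ =>
    ⟨le_max_left _ _, max_le ht.le (min_le_right _ _)⟩
  have hg_cont : Continuous g :=
    hcont.comp_continuous (continuous_const.max (continuous_id.min continuous_const)) hclamp_mem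
  have hg_eq : ∀ s ∈ Set.Icc (0:ℝ) t, g s = δ s := by
    intro s hs
    simp [hg_def, min_eq_left hs.2, max_eq_right hs.1]
  have hg_nn : ∀ τ, 0 ≤ g τ := fun τ => hnn _ (hclamp_mem τ)
  have hint_eq : ∀ s ∈ Set.Icc (0:ℝ) t, (∫ τ in s..t, g τ) = ∫ τ in s..t, δ τ := by
    intro s hs
    apply intervalIntegral.integral_congr
    intro x hx
    rw [Set.uIcc_of_le hs.2] at hx
    exact hg_eq x ⟨hs.1.trans hx.1, hx.2⟩
  set F : ℝ → ℝ := fun s => ∫ τ in s..t, g τ with hF_def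
  have hF_deriv : ∀ s, HasDerivAt F (-(g s)) s := fun s =>
    intervalIntegral.integral_hasDerivAt_left
      (hg_cont.intervalIntegrable _ _)
      (hg_cont.stronglyMeasurable.stronglyMeasurableAtFilter)
      hg_cont.continuousAt
  have hF_diff : Differentiable ℝ F := fun s => (hF_deriv s).differentiableAt
  have hF_cont : Continuous F := hF_diff.continuous
  have hF_nn : ∀ s ∈ Set.Icc (0:ℝ) t, 0 ≤ F s := fun s hs =>
    intervalIntegral.integral_nonneg hs.2 (fun τ _ => hg_nn τ)
  have hFt : F t = 0 := intervalIntegral.integral_same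
  have hFineq : ∀ s ∈ Set.Icc (0:ℝ) t, (g s) ^ 2 ≤ A * F s := by
    intro s hs
    rw [hg_eq s hs, hF_def]
    simpa [hint_eq s hs] using hineq s hs
  -- key estimate: F s ≤ ((√A/2)(t-s))²
  have key : ∀ s ∈ Set.Icc (0:ℝ) t, F s ≤ (Real.sqrt A / 2 * (t - s)) ^ 2 := by
    intro s hs
    have hts : 0 ≤ t - s := by linarith [hs.2]
    have hbound : ∀ ε > (0:ℝ), F s ≤ (Real.sqrt ε + Real.sqrt A / 2 * (t - s)) ^ 2 := by
      intro ε hε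
      set ψ : ℝ → ℝ := fun u => Real.sqrt (F u + ε) + Real.sqrt A / 2 * u with hψ_def
      have hψderiv : ∀ x ∈ interior (Set.Icc (0:ℝ) t),
          HasDerivAt ψ (-(g x) / (2 * Real.sqrt (F x + ε)) + Real.sqrt A / 2) x := by
        intro x hx
        rw [interior_Icc] at hx
        have hFx : 0 < F x + ε :=
          lt_of_lt_of_le hε (by linarith [hF_nn x ⟨hx.1.le, hx.2.le⟩])
        have h2 := ((hF_deriv x).add_const ε).sqrt hFx.ne'
        simpa [hψ_def] using h2.fun_add ((hasDerivAt_id x).const_mul (Real.sqrt A / 2))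
      have hψcont : Continuous ψ :=
        (Real.continuous_sqrt.comp (hF_cont.add continuous_const)).add
          (continuous_const.mul continuous_id)
      have hmono : MonotoneOn ψ (Set.Icc 0 t) := by
        apply monotoneOn_of_deriv_nonneg (convex_Icc 0 t) hψcont.continuousOn
        · intro x hx
          exact (hψderiv x hx).differentiableAt.differentiableWithinAt
        · intro x hx
          rw [(hψderiv x hx).deriv]
          rw [interior_Icc] at hx
          have hxI : x ∈ Set.Icc (0:ℝ) t := ⟨hx.1.le, hx.2.le⟩
          have hFx : 0 < F x + ε := lt_of_lt_of_le hε (by linarith [hF_nn x hxI])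
          have hs2 : 0 < Real.sqrt (F x + ε) := Real.sqrt_pos.mpr hFx
          have hgx : g x ≤ Real.sqrt A * Real.sqrt (F x + ε) := by
            rw [← Real.sqrt_mul hA]
            rw [show g x = Real.sqrt ((g x) ^ 2) from (Real.sqrt_sq (hg_nn x)).symm]
            apply Real.sqrt_le_sqrt
            calc (g x) ^ 2 ≤ A * F x := hFineq x hxI
              _ ≤ A * (F x + ε) := by nlinarith
          have hdiv : g x / (2 * Real.sqrt (F x + ε)) ≤ Real.sqrt A / 2 := by
            rw [div_le_iff₀ (by positivity)]
            nlinarith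
          rw [neg_div]
          linarith
      have hψle := hmono hs (Set.right_mem_Icc.mpr ht.le) hs.2
      have hψt : ψ t = Real.sqrt ε + Real.sqrt A / 2 * t := by simp [hψ_def, hFt]
      have hsqrt_le : Real.sqrt (F s + ε) ≤ Real.sqrt ε + Real.sqrt A / 2 * (t - s) := by
        have : Real.sqrt (F s + ε) + Real.sqrt A / 2 * s ≤
            Real.sqrt ε + Real.sqrt A / 2 * t := by rw [← hψt]; exact hψle
        nlinarith
      have hFsε : 0 ≤ F s + ε := by linarith [hF_nn s hs]
      calc F s ≤ F s + ε := by linarith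
        _ = Real.sqrt (F s + ε) ^ 2 := (Real.sq_sqrt hFsε).symm
        _ ≤ (Real.sqrt ε + Real.sqrt A / 2 * (t - s)) ^ 2 := by
            apply pow_le_pow_left₀ (Real.sqrt_nonneg _) hsqrt_le
    -- let ε → 0⁺
    have htend : Filter.Tendsto (fun ε => (Real.sqrt ε + Real.sqrt A / 2 * (t - s)) ^ 2)
        (nhdsWithin 0 (Set.Ioi 0)) (nhds ((Real.sqrt A / 2 * (t - s)) ^ 2)) := by
      have hc : Continuous fun ε => (Real.sqrt ε + Real.sqrt A / 2 * (t - s)) ^ 2 :=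
        (Real.continuous_sqrt.add continuous_const).pow 2
      have := hc.tendsto 0
      simp only [Real.sqrt_zero, zero_add] at this
      exact this.mono_left nhdsWithin_le_nhds
    refine ge_of_tendsto htend ?_
    filter_upwards [self_mem_nhdsWithin] with ε hε
    exact hbound ε hε
  -- conclude
  intro s hs
  have hts : 0 ≤ t - s := by linarith [hs.2]
  have h1 : δ s ^ 2 ≤ (A / 2 * (t - s)) ^ 2 := by
    have h2 := hFineq s hs
    rw [hg_eq s hs] at h2
    have h3 := key s hs
    have hsq : Real.sqrt A ^ 2 = A := Real.sq_sqrt hA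
    have heq : A * (Real.sqrt A / 2 * (t - s)) ^ 2 = (A / 2 * (t - s)) ^ 2 := by
      rw [mul_pow, div_pow, hsq]; ring
    calc δ s ^ 2 ≤ A * F s := h2
      _ ≤ A * (Real.sqrt A / 2 * (t - s)) ^ 2 := by nlinarith
      _ = (A / 2 * (t - s)) ^ 2 := heq
  have hδ := hnn s hs
  have hb : 0 ≤ A / 2 * (t - s) := by positivity
  calc δ s = Real.sqrt (δ s ^ 2) := (Real.sqrt_sq hδ).symm
    _ ≤ Real.sqrt ((A / 2 * (t - s)) ^ 2) := Real.sqrt_le_sqrt h1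
    _ = A / 2 * (t - s) := Real.sqrt_sq hb
end
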